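/- arXiv:2407.20486 — 2 statements merged into one kernel-verified Lean document; each statement's English description precedes it below -/
import Mathlib

section
/- Let c = (c_i), x = (x_i), and y = (y_i) be in ℂ^{l+1}. Define f(x,c) = Σ_{j=0}^{l} x_j ∏_{ν=0}^{j-1}(z-c_ν) and g(y,c) = Σ_{j=0}^{l} y_j / ∏_{ν=0}^{j}(z-c_ν). Then the sum of residues Σ_c res_{z=c}(f(x,c)·g(y,c)) over all poles equals Σ_{j=0}^{l} x_j y_j; in particular it is independent of c ∈ ℂ^{l+1}. -/
/-- Residue of a rational function at `c ∈ ℂ` (coefficient of `1/(z-c)` in the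
Laurent expansion at `c`). -/
noncomputable def resAt (c : ℂ) (f : RatFunc ℂ) : ℂ :=
  ((RatFunc.laurent c f : RatFunc ℂ) : LaurentSeries ℂ).coeff (-1)

/-!
Expanding the product, `f(x,c) · g(y,c) = ∑ᵢ ∑ⱼ xᵢ yⱼ ∏_{ν<i} (z - c_ν) / ∏_{ν≤j} (z - c_ν)`.
For `i > j` the summand is a polynomial and has no residues; for `i ≤ j` it is
`1 / ∏_{i≤ν≤j} (z - c_ν)`. The residues of `1 / ∏_{ρ∈m} (z - ρ)` sum to `1` when `m` is a
single node and to `0` otherwise: if all nodes coincide this is the residue of `(z - a)⁻ᵏ`, and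
otherwise the partial fraction identity
`1 / ((z-a)(z-b)u) = (1 / ((z-a)u) - 1 / ((z-b)u)) / (a - b)` lowers the number of nodes.
Hence only the diagonal terms `xᵢ yᵢ` survive.
-/

open scoped Polynomial

theorem resAt_sub (a : ℂ) (f g : RatFunc ℂ) : resAt a (f - g) = resAt a f - resAt a g := by
  simp only [resAt, map_sub, HahnSeries.coeff_sub]

theorem resAt_sum {ι : Type*} (a : ℂ) (s : Finset ι) (f : ι → RatFunc ℂ) :
    resAt a (∑ i ∈ s, f i) = ∑ i ∈ s, resAt a (f i) := by
  simp only [resAt, map_sum]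
  exact map_sum (HahnSeries.coeff.addMonoidHom (-1 : ℤ)) _ s

theorem resAt_C_mul (a r : ℂ) (f : RatFunc ℂ) : resAt a (RatFunc.C r * f) = r * resAt a f := by
  rw [resAt, map_mul, RatFunc.laurent_C, map_mul, ← RatFunc.algebraMap_C,
    ← IsScalarTower.algebraMap_apply]
  simp [resAt]

theorem resAt_div_eq_zero_of_eval_ne_zero {a : ℂ} (p : ℂ[X]) {q : ℂ[X]} (hq : q.eval a ≠ 0) :
    resAt a (algebraMap ℂ[X] (RatFunc ℂ) p / algebraMap ℂ[X] (RatFunc ℂ) q) = 0 := by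
  set P : PowerSeries ℂ := ((Polynomial.taylor a p : ℂ[X]) : PowerSeries ℂ)
  set Q : PowerSeries ℂ := ((Polynomial.taylor a q : ℂ[X]) : PowerSeries ℂ)
  have hQ : (Q : LaurentSeries ℂ) * (Q⁻¹ : PowerSeries ℂ) = 1 := by
    rw [← PowerSeries.coe_mul, PowerSeries.mul_inv_cancel Q (by simpa [Q, PowerSeries.coeff_coe]),
      PowerSeries.coe_one]
  have hexpansion : ((RatFunc.laurent a (algebraMap ℂ[X] (RatFunc ℂ) p
      / algebraMap ℂ[X] (RatFunc ℂ) q) : RatFunc ℂ) : LaurentSeries ℂ)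
      = ((P * Q⁻¹ : PowerSeries ℂ) : LaurentSeries ℂ) := by
    rw [RatFunc.laurent_div, map_div₀, ← RatFunc.coePolynomial_eq_algebraMap,
      ← RatFunc.coePolynomial_eq_algebraMap, ← RatFunc.coe_coe, ← RatFunc.coe_coe,
      PowerSeries.coe_mul, div_eq_iff (left_ne_zero_of_mul_eq_one hQ), mul_assoc,
      mul_comm _ (Q : LaurentSeries ℂ), hQ, mul_one]
  rw [resAt, hexpansion, PowerSeries.coeff_coe]
  simp

theorem resAt_algebraMap (a : ℂ) (p : ℂ[X]) : resAt a (algebraMap ℂ[X] (RatFunc ℂ) p) = 0 := by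
  simpa only [map_one, div_one] using
    resAt_div_eq_zero_of_eval_ne_zero (a := a) p (q := 1) (by simp)

theorem resAt_inv_X_sub_C_pow (a : ℂ) (k : ℕ) :
    resAt a ((RatFunc.X - RatFunc.C a) ^ k)⁻¹ = if k = 1 then 1 else 0 := by
  have hX : ((((RatFunc.X : RatFunc ℂ) ^ k)⁻¹ : RatFunc ℂ) : LaurentSeries ℂ)
      = HahnSeries.single (-(k : ℤ)) 1 := by
    simp [HahnSeries.inv_single]
  rw [resAt, map_inv₀, map_pow, map_sub, RatFunc.laurent_X, RatFunc.laurent_C,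
    add_sub_cancel_right, hX, HahnSeries.coeff_single]
  grind

theorem inv_mul_mul_eq_inv_sub_mul {K : Type*} [Field K] {A B : K} (hA : A ≠ 0) (hB : B ≠ 0)
    (hAB : B - A ≠ 0) (U : K) : (A * B * U)⁻¹ = (B - A)⁻¹ * ((A * U)⁻¹ - (B * U)⁻¹) := by
  rcases eq_or_ne U 0 with rfl | hU
  · simp
  field_simp

namespace RatFunc

variable {K : Type*} [Field K]

theorem X_sub_C_eq_algebraMap (b : K) :
    (X - C b : RatFunc K) = algebraMap K[X] (RatFunc K) (Polynomial.X - Polynomial.C b) := by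
  rw [map_sub, algebraMap_X, algebraMap_C]

theorem X_sub_C_ne_zero (b : K) : (X - C b : RatFunc K) ≠ 0 := by
  rw [X_sub_C_eq_algebraMap]
  exact algebraMap_ne_zero (Polynomial.X_sub_C_ne_zero b)

theorem multiset_prod_X_sub_C_eq_algebraMap (m : Multiset K) :
    (m.map fun ρ => X - C ρ).prod
      = algebraMap K[X] (RatFunc K) (m.map fun ρ => Polynomial.X - Polynomial.C ρ).prod := by
  simp only [map_multiset_prod, Multiset.map_map, Function.comp_def, X_sub_C_eq_algebraMap]

theorem inv_prod_X_sub_C_cons_cons {a b : K} (hab : a ≠ b) (t : Multiset K) :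
    ((a ::ₘ b ::ₘ t).map fun ρ => X - C ρ).prod⁻¹
      = C (a - b)⁻¹ * (((a ::ₘ t).map fun ρ => X - C ρ).prod⁻¹
        - ((b ::ₘ t).map fun ρ => X - C ρ).prod⁻¹) := by
  have hBA : (X - C b) - (X - C a) = C (a - b) := by
    rw [map_sub]; ring
  simp only [Multiset.map_cons, Multiset.prod_cons, ← mul_assoc]
  rw [inv_mul_mul_eq_inv_sub_mul (X_sub_C_ne_zero a) (X_sub_C_ne_zero b)
    (hBA ▸ (map_ne_zero C).mpr (sub_ne_zero.mpr hab)), hBA, map_inv₀]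

end RatFunc

theorem resAt_inv_prod_X_sub_C_of_notMem {a : ℂ} {m : Multiset ℂ} (ha : a ∉ m) :
    resAt a (m.map fun ρ => RatFunc.X - RatFunc.C ρ).prod⁻¹ = 0 := by
  have hq : ((m.map fun ρ => Polynomial.X - Polynomial.C ρ).prod).eval a ≠ 0 := by
    simpa [Polynomial.eval_multiset_prod, Multiset.prod_eq_zero_iff, sub_eq_zero, eq_comm]
      using ha
  simpa only [RatFunc.multiset_prod_X_sub_C_eq_algebraMap, map_one, one_div]
    using resAt_div_eq_zero_of_eval_ne_zero 1 hq

theorem sum_resAt_inv_prod_X_sub_C (m : Multiset ℂ) {T : Finset ℂ} (hT : ∀ ρ ∈ m, ρ ∈ T) :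
    ∑ a ∈ T, resAt a (m.map fun ρ => RatFunc.X - RatFunc.C ρ).prod⁻¹
      = if Multiset.card m = 1 then 1 else 0 := by
  obtain ⟨n, hn⟩ : ∃ n, Multiset.card m = n := ⟨_, rfl⟩
  induction n generalizing m with
  | zero =>
    rw [Multiset.card_eq_zero.mp hn]
    simpa using Finset.sum_eq_zero fun a _ => by simpa using resAt_algebraMap a 1
  | succ n ih =>
    by_cases hsplit : ∃ a ∈ m, ∃ b ∈ m, a ≠ b
    · obtain ⟨a, ha, b, hb, hab⟩ := hsplit
      obtain ⟨t, rfl⟩ : ∃ t, m = a ::ₘ b ::ₘ t :=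
        ⟨(m.erase a).erase b, by
          rw [Multiset.cons_erase ((Multiset.mem_erase_of_ne hab.symm).mpr hb),
            Multiset.cons_erase ha]⟩
      simp only [RatFunc.inv_prod_X_sub_C_cons_cons hab, resAt_C_mul, resAt_sub,
        ← Finset.mul_sum, Finset.sum_sub_distrib]
      simp only [Multiset.card_cons] at hn
      rw [ih (a ::ₘ t) (fun ρ hρ => hT ρ (Multiset.mem_of_le (Multiset.cons_le_cons a
          (Multiset.le_cons_self t b)) hρ)) (by simpa using hn),
        ih (b ::ₘ t) (fun ρ hρ => hT ρ (Multiset.mem_of_le (Multiset.le_cons_self _ a) hρ))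
          (by simpa using hn)]
      simp
    · push Not at hsplit
      obtain ⟨a, ha⟩ := Multiset.card_pos_iff_exists_mem.mp (by rw [hn]; omega)
      obtain rfl : m = Multiset.replicate (n + 1) a :=
        Multiset.eq_replicate.mpr ⟨hn, fun b hb => hsplit b hb a ha⟩
      rw [Finset.sum_eq_single_of_mem a (hT a ha) fun b _ hb =>
        resAt_inv_prod_X_sub_C_of_notMem fun hb' => hb (Multiset.eq_of_mem_replicate hb')]
      simp only [Multiset.map_replicate, Multiset.prod_replicate, resAt_inv_X_sub_C_pow, hn]

section LocallyFiniteOrder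

variable {ι : Type*} [LinearOrder ι] [LocallyFiniteOrder ι] [LocallyFiniteOrderBot ι]

theorem Finset.prod_Iio_div_prod_Iic_of_le {K : Type*} [Field K] {f : ι → K} {i j : ι}
    (hij : i ≤ j) (hf : ∀ ν ∈ Finset.Iio i, f ν ≠ 0) :
    (∏ ν ∈ Finset.Iio i, f ν) / ∏ ν ∈ Finset.Iic j, f ν = (∏ ν ∈ Finset.Icc i j, f ν)⁻¹ := by
  have hdiff : Finset.Iic j \ Finset.Iio i = Finset.Icc i j := by
    ext ν
    simp only [Finset.mem_sdiff, Finset.mem_Iic, Finset.mem_Iio, Finset.mem_Icc, not_lt]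
    tauto
  have hsub : Finset.Iio i ⊆ Finset.Iic j := fun ν hν =>
    Finset.mem_Iic.mpr ((Finset.mem_Iio.mp hν).le.trans hij)
  rw [← Finset.prod_sdiff hsub, hdiff, div_mul_cancel_right₀ (Finset.prod_ne_zero_iff.mpr hf)]

theorem Finset.prod_Iio_div_prod_Iic_of_lt {K : Type*} [Field K] {f : ι → K} {i j : ι}
    (hji : j < i) (hf : ∀ ν ∈ Finset.Iic j, f ν ≠ 0) :
    (∏ ν ∈ Finset.Iio i, f ν) / ∏ ν ∈ Finset.Iic j, f ν = ∏ ν ∈ Finset.Ioo j i, f ν := by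
  have hdiff : Finset.Iio i \ Finset.Iic j = Finset.Ioo j i := by
    ext ν
    simp only [Finset.mem_sdiff, Finset.mem_Iic, Finset.mem_Iio, Finset.mem_Ioo, not_le]
    tauto
  have hsub : Finset.Iic j ⊆ Finset.Iio i := fun ν hν =>
    Finset.mem_Iio.mpr ((Finset.mem_Iic.mp hν).trans_lt hji)
  rw [← Finset.prod_sdiff hsub, hdiff, mul_div_cancel_right₀ _ (Finset.prod_ne_zero_iff.mpr hf)]

theorem sum_resAt_prod_Iio_div_prod_Iic (c : ι → ℂ) {T : Finset ℂ} (hT : ∀ ν, c ν ∈ T)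
    (i j : ι) :
    ∑ a ∈ T, resAt a ((∏ ν ∈ Finset.Iio i, (RatFunc.X - RatFunc.C (c ν)))
      / ∏ ν ∈ Finset.Iic j, (RatFunc.X - RatFunc.C (c ν))) = if i = j then 1 else 0 := by
  rcases le_or_gt i j with hij | hji
  · have hpoles := sum_resAt_inv_prod_X_sub_C ((Finset.Icc i j).val.map c) (T := T)
      fun ρ hρ => by obtain ⟨ν, -, rfl⟩ := Multiset.mem_map.mp hρ; exact hT ν
    simp only [Multiset.map_map, Function.comp_def, Multiset.card_map] at hpoles
    rw [Finset.prod_Iio_div_prod_Iic_of_le hij fun ν _ => RatFunc.X_sub_C_ne_zero _,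
      Finset.prod_eq_multiset_prod, hpoles]
    simp [Finset.card_eq_one, Finset.Icc_eq_singleton_iff, eq_comm]
  · rw [Finset.prod_Iio_div_prod_Iic_of_lt hji fun ν _ => RatFunc.X_sub_C_ne_zero _,
      if_neg hji.ne']
    simp only [RatFunc.X_sub_C_eq_algebraMap, ← map_prod, resAt_algebraMap, Finset.sum_const_zero]

end LocallyFiniteOrder

/-- Corollary `cor:nondeg`.
For `c, x, y ∈ ℂ^{l+1}`, with
`f(x,c) = Σ_j x_j ∏_{ν=0}^{j-1}(z-c_ν)` and `g(y,c) = Σ_j y_j / ∏_{ν=0}^{j}(z-c_ν)`,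
the sum of residues of `f(x,c)·g(y,c)` over all poles equals `Σ_j x_j y_j`;
in particular it is independent of `c`. -/
theorem residue_pairing_constant (l : ℕ) (c x y : Fin (l + 1) → ℂ) :
    ∑ a ∈ Finset.image c Finset.univ,
      resAt a
        ((∑ j : Fin (l + 1),
            RatFunc.C (x j) * ∏ ν ∈ Finset.Iio j, (RatFunc.X - RatFunc.C (c ν)))
          * (∑ j : Fin (l + 1),
            RatFunc.C (y j) / ∏ ν ∈ Finset.Iic j, (RatFunc.X - RatFunc.C (c ν))))
      = ∑ j : Fin (l + 1), x j * y j := by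
  have hterm : ∀ i j : Fin (l + 1),
      RatFunc.C (x i) * (∏ ν ∈ Finset.Iio i, (RatFunc.X - RatFunc.C (c ν)))
        * (RatFunc.C (y j) / ∏ ν ∈ Finset.Iic j, (RatFunc.X - RatFunc.C (c ν)))
      = RatFunc.C (x i * y j) * ((∏ ν ∈ Finset.Iio i, (RatFunc.X - RatFunc.C (c ν)))
        / ∏ ν ∈ Finset.Iic j, (RatFunc.X - RatFunc.C (c ν))) := fun i j => by
    rw [map_mul]; ring
  have hpoles : ∀ ν, c ν ∈ Finset.image c Finset.univ := fun ν =>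
    Finset.mem_image_of_mem c (Finset.mem_univ ν)
  simp only [Finset.sum_mul_sum, hterm, resAt_sum, resAt_C_mul]
  rw [Finset.sum_comm]
  refine (Finset.sum_congr rfl fun i _ => Finset.sum_comm).trans ?_
  simp only [← Finset.mul_sum, sum_resAt_prod_Iio_div_prod_Iic c hpoles, mul_ite, mul_one,
    mul_zero, Finset.sum_ite_eq, Finset.mem_univ, if_true]
end

section
/- With notation as in the theory of unramified canonical forms: let H = (Σ_{i=1}^{k} H_i z^{-i} + H_res) z^{-1} where H_i are commuting semisimple elements and H_res commutes with all H_i, and let 𝔩_i = {X ∈ 𝔤 : [X, H_j] = 0 for all j ≥ i}. Then the stabilizer of H in G(ℂ[z]/⟨z^{k+1}⟩)_1 (the kernel of evaluation at z=0) equals {e^{X_k z^k} ⋯ e^{X_2 z^2} e^{X_1 z} : X_i ∈ 𝔩_i for i=1,...,k}, where H is regarded as an element of 𝔤 ⊗ (z^{-(k+1)}ℂ[[z]]/ℂ[[z]]) with the coadjoint action. -/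
/-!
Write `X_1, …, X_k` for the exponents of `g` and `wt m = Σ_j j m_j` for a multi-index `m`, so that
`C_i` is a sum over `m` of iterated brackets applied to `B_{i + wt m}`. If `[X_j, B_n] = 0`
whenever `n > i + j`, only `m = 0` and the unit vectors contribute, and
`C_i = B_i + Σ_j [X_j, B_{i+j}]`. This shows at once that `H` is fixed when all these brackets
vanish. Conversely, descending induction on `i` reduces to deducing `[X_j, B_{i+j}] = 0` from
`Σ_j [X_j, B_{i+j}] = 0`. For `j` from `k` down to `1`, the terms of larger index are already
known to vanish and `ad B_{i+j}` kills those of smaller index (the `B`s commute and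
`[X_{j'}, B_{i+j}] = 0` for `j' < j`), so
`(ad B_{i+j})² X_j = 0`, and semisimplicity of `ad B_{i+j}` gives `ad B_{i+j} X_j = 0`.
-/

/-- The coefficient `C_i` of `z^{-i-1}` in the coadjoint action of
`g = e^{z^k X_k} ⋯ e^{z^2 X_2} e^{z X_1} ∈ G(ℂ[z]/⟨z^{k+1}⟩)_1` on
`B = Σ_i B_i z^{-i-1}`, given by
`C_i = Σ_{m_1,…,m_k ≥ 0} ad(X_k)^{m_k}∘⋯∘ad(X_1)^{m_1}(B_{i+m_1+2m_2+⋯+k m_k}) / (m_1!⋯m_k!)`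
(the sum is finite since `B_j = 0` for `j > k`; terms with any `m_j > k` vanish, so we
may sum over `m_j ≤ k`).  Here `X (j : Fin k)` stands for `X_{j+1}`. -/
noncomputable def coadCoeff (N k : ℕ) (X : Fin k → Matrix (Fin N) (Fin N) ℂ)
    (B : ℕ → Matrix (Fin N) (Fin N) ℂ) (i : ℕ) : Matrix (Fin N) (Fin N) ℂ :=
  ∑ m : Fin k → Fin (k + 1),
    ((∏ j : Fin k, ((m j : ℕ).factorial : ℂ))⁻¹) •
      (((List.ofFn (fun j : Fin k =>
          (fun w : Matrix (Fin N) (Fin N) ℂ => ⁅X j, w⁆)^[(m j : ℕ)])).reverse).foldr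
        (· ∘ ·) id)
        (B (i + ∑ j : Fin k, ((j : ℕ) + 1) * (m j : ℕ)))

attribute [local instance 100] LieRing.ofAssociativeRing

theorem Module.End.IsSemisimple.apply_eq_zero_of_apply_apply_eq_zero {K M : Type*} [Field K]
    [AddCommGroup M] [Module K M] {f : Module.End K M} (hf : f.IsSemisimple) {x : M}
    (hx : f (f x) = 0) : f x = 0 := by
  have hx2 : x ∈ f.genEigenspace 0 (2 : ℕ) := by
    rw [Module.End.mem_genEigenspace_nat]
    simpa [pow_two] using hx
  rw [hf.isFinitelySemisimple.genEigenspace_eq_eigenspace 0 (by norm_num),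
    Module.End.mem_eigenspace_iff, zero_smul] at hx2
  exact hx2

theorem Matrix.isSemisimple_ad_of_isSemisimple_mulVecLin {n K : Type*} [Fintype n]
    [DecidableEq n] [Field K] [PerfectField K] {A : Matrix n n K}
    (hA : Module.End.IsSemisimple A.mulVecLin) :
    (LieAlgebra.ad K (Matrix n n K) A).IsSemisimple := by
  have hA' : lieEquivMatrix' A.mulVecLin = A := LinearMap.toMatrix'_toLin' A
  rw [← hA', ← LieAlgebra.conj_ad_apply]
  set e := (lieEquivMatrix' : Module.End K (n → K) ≃ₗ⁅K⁆ Matrix n n K).toLinearEquiv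
  exact (LinearEquiv.isSemisimple_iff _ _ e (LinearMap.ext fun _ => by simp)).mp
    (LieAlgebra.ad_isSemisimple_of_isSemisimple hA)

open LieAlgebra in
theorem lie_eq_zero_of_sum_lie_eq_zero {K L ι : Type*} [Field K] [LieRing L] [LieAlgebra K L]
    [Fintype ι] [LinearOrder ι] {H X : ι → L} (hH : ∀ a b, ⁅H a, H b⁆ = 0)
    (hss : ∀ a, (ad K L (H a)).IsSemisimple) (hXH : ∀ a b, a < b → ⁅X a, H b⁆ = 0)
    (hsum : ∑ a, ⁅X a, H a⁆ = 0) (a : ι) : ⁅X a, H a⁆ = 0 := by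
  induction a using WellFoundedGT.induction with
  | _ a ih =>
  have hother : ∀ b, b ≠ a → ⁅H a, ⁅X b, H b⁆⁆ = 0 := fun b hba => by
    rcases hba.lt_or_gt with hba | hab
    · rw [leibniz_lie, hH, lie_zero, add_zero, ← lie_skew (H a) (X b), hXH b a hba, neg_zero,
        zero_lie]
    · rw [ih b hab, lie_zero]
  have hsq : ad K L (H a) (ad K L (H a) (X a)) = 0 := by
    calc ad K L (H a) (ad K L (H a) (X a)) = -⁅H a, ∑ b, ⁅X b, H b⁆⁆ := by
          rw [lie_sum, Finset.sum_eq_single_of_mem a (Finset.mem_univ a) (fun b _ => hother b),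
            ad_apply, ad_apply, ← lie_skew (X a), lie_neg, neg_neg]
      _ = 0 := by rw [hsum, lie_zero, neg_zero]
  rw [← lie_skew, ← ad_apply K, (hss a).apply_eq_zero_of_apply_apply_eq_zero hsq, neg_zero]

section
variable {L : Type*} [LieRing L]

def adMonomial {n : ℕ} (X : Fin n → L) (e : Fin n → ℕ) : L → L :=
  (List.ofFn fun j => (fun w => ⁅X j, w⁆)^[e j]).reverse.foldr (· ∘ ·) id

theorem adMonomial_succ {n : ℕ} (X : Fin (n + 1) → L) (e : Fin (n + 1) → ℕ) :
    adMonomial X e = adMonomial (Fin.tail X) (Fin.tail e) ∘ (fun w => ⁅X 0, w⁆)^[e 0] := by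
  have foldr_comp : ∀ (l : List (L → L)) (f : L → L),
      l.foldr (· ∘ ·) f = l.foldr (· ∘ ·) id ∘ f := by
    intro l f
    induction l with
    | nil => rfl
    | cons g l ih => simp [ih, Function.comp_assoc]
  simp only [adMonomial, List.ofFn_succ, List.reverse_cons, List.foldr_append]
  exact foldr_comp _ _

theorem adMonomial_zero {n : ℕ} (X : Fin n → L) : adMonomial X 0 = id := by
  induction n with
  | zero => rfl
  | succ n ih => rw [adMonomial_succ]; exact ih _

theorem adMonomial_apply_zero {n : ℕ} (X : Fin n → L) (e : Fin n → ℕ) :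
    adMonomial X e 0 = 0 := by
  induction n with
  | zero => rfl
  | succ n ih =>
    rw [adMonomial_succ, Function.comp_apply, Function.iterate_fixed (lie_zero _), ih]

theorem adMonomial_single_apply {n : ℕ} (X : Fin n → L) (j : Fin n) (v : L) :
    adMonomial X (Pi.single j 1) v = ⁅X j, v⁆ := by
  induction n with
  | zero => exact j.elim0
  | succ n ih =>
    rw [adMonomial_succ, Function.comp_apply]
    cases j using Fin.cases with
    | zero =>
      have : Fin.tail (Pi.single (0 : Fin (n + 1)) 1 : Fin (n + 1) → ℕ) = 0 := by
        ext j; simp [Fin.tail, Fin.succ_ne_zero]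
      simp [this, adMonomial_zero]
    | succ j =>
      have : Fin.tail (Pi.single j.succ 1 : Fin (n + 1) → ℕ) = Pi.single j 1 := by
        ext j'; simp [Fin.tail, Pi.single_apply]
      simp [this, ih, (Fin.succ_ne_zero j).symm, Fin.tail]

theorem adMonomial_apply_eq_zero {n : ℕ} {X : Fin n → L} {e : Fin n → ℕ} {v : L} (he : e ≠ 0)
    (hv : ∀ j, e j ≠ 0 → ⁅X j, v⁆ = 0) : adMonomial X e v = 0 := by
  induction n with
  | zero => exact absurd (Subsingleton.elim e 0) he
  | succ n ih =>
    rw [adMonomial_succ, Function.comp_apply]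
    by_cases h0 : e 0 = 0
    · rw [h0, Function.iterate_zero_apply]
      refine ih (fun htail => he ?_) (fun j hj => hv j.succ hj)
      ext j; cases j using Fin.cases with
      | zero => exact h0
      | succ j => exact congrFun htail j
    · obtain ⟨p, hp⟩ := Nat.exists_eq_succ_of_ne_zero h0
      rw [hp, Function.iterate_succ_apply, hv 0 h0, Function.iterate_fixed (lie_zero _),
        adMonomial_apply_zero]

end

def weightedDegree {k : ℕ} (e : Fin k → ℕ) : ℕ := ∑ j : Fin k, ((j : ℕ) + 1) * e j

theorem weightedDegree_zero (k : ℕ) : weightedDegree (0 : Fin k → ℕ) = 0 := by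
  simp [weightedDegree]

theorem weightedDegree_single {k : ℕ} (j : Fin k) :
    weightedDegree (Pi.single j 1 : Fin k → ℕ) = j + 1 := by
  simp [weightedDegree, Pi.single_apply]

theorem add_two_le_weightedDegree {k : ℕ} {e : Fin k → ℕ} (he : ∀ j, e ≠ Pi.single j 1)
    {j : Fin k} (hj : e j ≠ 0) : (j : ℕ) + 2 ≤ weightedDegree e := by
  have hle : ∀ s : Finset (Fin k), ∑ j ∈ s, ((j : ℕ) + 1) * e j ≤ weightedDegree e :=
    fun s => Finset.sum_le_sum_of_subset (Finset.subset_univ s)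
  by_cases h1 : e j = 1
  · obtain ⟨j', hj'e, hj'⟩ : ∃ j', j' ≠ j ∧ e j' ≠ 0 := by
      by_contra! h
      exact he j (funext fun j' => by
        by_cases hj' : j' = j
        · subst hj'; simp [h1]
        · simp [hj', h j' hj'])
    have := hle {j, j'}
    rw [Finset.sum_pair hj'e.symm, h1] at this
    nlinarith [Nat.one_le_iff_ne_zero.mpr hj']
  · have := hle {j}
    rw [Finset.sum_singleton] at this
    nlinarith [Nat.two_le_iff (e j) |>.mpr ⟨hj, h1⟩]

noncomputable def coadTerm {L : Type*} [LieRing L] [Module ℂ L] {k : ℕ} (X : Fin k → L)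
    (B : ℕ → L) (i : ℕ) (e : Fin k → ℕ) : L :=
  (∏ j, ((e j).factorial : ℂ))⁻¹ • adMonomial X e (B (i + weightedDegree e))

theorem coadCoeff_eq_sum_coadTerm (N k : ℕ) (X : Fin k → Matrix (Fin N) (Fin N) ℂ)
    (B : ℕ → Matrix (Fin N) (Fin N) ℂ) (i : ℕ) :
    coadCoeff N k X B i = ∑ m : Fin k → Fin (k + 1), coadTerm X B i (Fin.val ∘ m) :=
  rfl

theorem coadTerm_eq_of_lie_eq_zero {L : Type*} [LieRing L] [Module ℂ L] {k : ℕ} {X : Fin k → L}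
    {B : ℕ → L} {i : ℕ} (hB : ∀ j : Fin k, ∀ n, i + j + 2 ≤ n → ⁅X j, B n⁆ = 0)
    (e : Fin k → ℕ) :
    coadTerm X B i e = (if e = 0 then B i else 0) +
      ∑ j, if e = Pi.single j 1 then ⁅X j, B (i + j + 1)⁆ else 0 := by
  by_cases h0 : e = 0
  · subst h0
    simp [coadTerm, adMonomial_zero, weightedDegree_zero, eq_comm (a := (0 : Fin k → ℕ))]
  by_cases hunit : ∃ j, e = Pi.single j 1
  · obtain ⟨j, rfl⟩ := hunit
    have hinj : ∀ j', (Pi.single j 1 : Fin k → ℕ) = Pi.single j' 1 ↔ j' = j := fun j' => by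
      refine ⟨fun h => ?_, fun h => h ▸ rfl⟩
      by_contra hne
      simpa [Pi.single_apply, Ne.symm hne] using congrFun h j
    simp only [hinj, Fintype.sum_ite_eq', if_neg h0, zero_add]
    simp [coadTerm, Pi.single_apply, apply_ite Nat.factorial, adMonomial_single_apply,
      weightedDegree_single, add_assoc]
  · rw [not_exists] at hunit
    rw [if_neg h0, Finset.sum_eq_zero (fun j _ => if_neg (hunit j)), add_zero, coadTerm,
      adMonomial_apply_eq_zero h0 (fun j hj => hB j _ ?_), smul_zero]
    have := add_two_le_weightedDegree hunit hj
    omega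

theorem coadCoeff_eq_add_sum_lie {N k : ℕ} {X : Fin k → Matrix (Fin N) (Fin N) ℂ}
    {B : ℕ → Matrix (Fin N) (Fin N) ℂ} {i : ℕ}
    (hB : ∀ j : Fin k, ∀ n, i + j + 2 ≤ n → ⁅X j, B n⁆ = 0) :
    coadCoeff N k X B i = B i + ∑ j : Fin k, ⁅X j, B (i + j + 1)⁆ := by
  have hval : ∀ m₀ : Fin k → Fin (k + 1), ∀ m, Fin.val ∘ m = Fin.val ∘ m₀ ↔ m = m₀ :=
    fun _ _ => (Fin.val_injective.comp_left).eq_iff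
  have hsingle : ∀ j : Fin k, (Pi.single j 1 : Fin k → ℕ) =
      Fin.val ∘ (Pi.single j 1 : Fin k → Fin (k + 1)) := by
    intro j
    obtain ⟨k', rfl⟩ := Nat.exists_eq_add_one_of_ne_zero (Fin.pos j).ne'
    ext j'
    by_cases h : j' = j <;> simp [h]
  have hzero : (0 : Fin k → ℕ) = Fin.val ∘ (0 : Fin k → Fin (k + 1)) := by ext; simp
  simp only [coadCoeff_eq_sum_coadTerm, coadTerm_eq_of_lie_eq_zero hB, Finset.sum_add_distrib,
    hzero, hsingle, hval, Fintype.sum_ite_eq']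
  rw [Finset.sum_comm]
  simp only [Fintype.sum_ite_eq']

theorem lie_eq_zero_of_coadCoeff_eq_of_succ {N k : ℕ} {X : Fin k → Matrix (Fin N) (Fin N) ℂ}
    {B : ℕ → Matrix (Fin N) (Fin N) ℂ} (hBcomm : ∀ i j, Commute (B i) (B j))
    (hBss : ∀ i, 1 ≤ i → Module.End.IsSemisimple (Matrix.mulVecLin (B i))) {i : ℕ}
    (hC : coadCoeff N k X B i = B i)
    (hB : ∀ j : Fin k, ∀ n, i + 1 + j + 1 ≤ n → ⁅X j, B n⁆ = 0) :
    ∀ j : Fin k, ∀ n, i + j + 1 ≤ n → ⁅X j, B n⁆ = 0 := by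
  have hsum : ∑ j : Fin k, ⁅X j, B (i + j + 1)⁆ = 0 := by
    have := coadCoeff_eq_add_sum_lie (i := i) (fun j n hn => hB j n (by omega))
    rwa [hC, eq_comm, add_eq_left] at this
  have hdiag := lie_eq_zero_of_sum_lie_eq_zero (K := ℂ) (H := fun j : Fin k => B (i + j + 1))
    (fun _ _ => (hBcomm _ _).lie_eq)
    (fun _ => Matrix.isSemisimple_ad_of_isSemisimple_mulVecLin (hBss _ (by omega)))
    (fun a b hab => hB a _ (by have := Fin.lt_def.mp hab; omega)) hsum
  intro j n hn
  rcases hn.eq_or_lt with rfl | hlt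
  · exact hdiag j
  · exact hB j n (by omega)

theorem lie_eq_zero_of_coadCoeff_eq {N k : ℕ} {X : Fin k → Matrix (Fin N) (Fin N) ℂ}
    {B : ℕ → Matrix (Fin N) (Fin N) ℂ} (hBtop : ∀ i, k < i → B i = 0)
    (hBcomm : ∀ i j, Commute (B i) (B j))
    (hBss : ∀ i, 1 ≤ i → Module.End.IsSemisimple (Matrix.mulVecLin (B i)))
    (hC : ∀ i, coadCoeff N k X B i = B i) :
    ∀ j : Fin k, ∀ n : ℕ, (j : ℕ) + 1 ≤ n → ⁅X j, B n⁆ = 0 := by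
  have hk : ∀ j : Fin k, ∀ n, k + j + 1 ≤ n → ⁅X j, B n⁆ = 0 := fun j n hn => by
    rw [hBtop n (by omega), lie_zero]
  simpa using Nat.decreasingInduction
    (motive := fun i _ => ∀ j : Fin k, ∀ n, i + j + 1 ≤ n → ⁅X j, B n⁆ = 0)
    (fun i _ => lie_eq_zero_of_coadCoeff_eq_of_succ hBcomm hBss (hC i)) hk (Nat.zero_le k)

theorem coadCoeff_eq_self_of_lie_eq_zero {N k : ℕ} {X : Fin k → Matrix (Fin N) (Fin N) ℂ}
    {B : ℕ → Matrix (Fin N) (Fin N) ℂ}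
    (hB : ∀ j : Fin k, ∀ n : ℕ, (j : ℕ) + 1 ≤ n → ⁅X j, B n⁆ = 0) (i : ℕ) :
    coadCoeff N k X B i = B i := by
  rw [coadCoeff_eq_add_sum_lie (fun j n hn => hB j n (by omega)),
    Finset.sum_eq_zero (fun j _ => hB j _ (by omega)), add_zero]

-- `B 0` is `H_res` and `B i` is `H_i`; the right-hand side says `X_{j+1} ∈ 𝔩_{j+1}` for all `j`.
theorem stabilizer_of_canonical_form_general (N k : ℕ)
    (B : ℕ → Matrix (Fin N) (Fin N) ℂ)
    (hBtop : ∀ i, k < i → B i = 0)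
    (hBcomm : ∀ i j, Commute (B i) (B j))
    (hBss : ∀ i, 1 ≤ i → Module.End.IsSemisimple (Matrix.mulVecLin (B i)))
    (X : Fin k → Matrix (Fin N) (Fin N) ℂ) :
    (∀ i, coadCoeff N k X B i = B i) ↔
      (∀ j : Fin k, ∀ m : ℕ, (j : ℕ) + 1 ≤ m → ⁅X j, B m⁆ = 0) :=
  ⟨lie_eq_zero_of_coadCoeff_eq hBtop hBcomm hBss, coadCoeff_eq_self_of_lie_eq_zero⟩

/-- Proposition `prop:stabh`.
Let `𝔤 ⊆ 𝔤𝔩_N(ℂ)` and let `H = (Σ_{i=1}^{k} H_i z^{-i} + H_res) z^{-1}` be an unramified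
canonical form (`B i = H_i ∈ 𝔤`, `B 0 = H_res`; the `H_i`, `i ≥ 1`, semisimple, mutually
commuting, and commuting with `H_res`), regarded in `𝔤 ⊗ z^{-(k+1)}ℂ[[z]]/ℂ[[z]]` with the
coadjoint action.  Then the stabilizer of `H` in `G(ℂ[z]/⟨z^{k+1}⟩)_1` is exactly
`{e^{X_k z^k} ⋯ e^{X_2 z^2} e^{X_1 z} : X_i ∈ 𝔩_i, i = 1,…,k}` where
`𝔩_i = {Y ∈ 𝔤 : [Y, H_j] = 0 for all j ≥ i}`:
i.e. `Ad*(e^{X_k z^k}⋯e^{X_1 z})(H) = H` iff `X_i ∈ 𝔩_i` for all `i`. -/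
theorem stabilizer_of_canonical_form (N k : ℕ)
    (𝔤 : LieSubalgebra ℂ (Matrix (Fin N) (Fin N) ℂ))
    (B : ℕ → Matrix (Fin N) (Fin N) ℂ)
    (hBmem : ∀ i, B i ∈ 𝔤) (hBtop : ∀ i, k < i → B i = 0)
    (hBcomm : ∀ i j, Commute (B i) (B j))
    (hBss : ∀ i, 1 ≤ i → Module.End.IsSemisimple (Matrix.mulVecLin (B i)))
    (X : Fin k → Matrix (Fin N) (Fin N) ℂ) (hX : ∀ j, X j ∈ 𝔤) :
    (∀ i, coadCoeff N k X B i = B i) ↔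
      (∀ j : Fin k, ∀ m : ℕ, (j : ℕ) + 1 ≤ m → ⁅X j, B m⁆ = 0) :=
  stabilizer_of_canonical_form_general N k B hBtop hBcomm hBss X
end
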